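/- arXiv:2512.12329 — 2 statements merged into one kernel-verified Lean document; each statement's English description precedes it below -/
import Mathlib

section
/- For every finite graph G and weighting w of G, there exists an induced path P in G such that N[P], the closed neighbourhood of the vertex set of P, is a w-balanced separator of G. -/
open SimpleGraph

variable {V : Type}

/-- `u` and `v` are connected by a walk in `G` avoiding `S`
(i.e., they lie in the same component of `G - S`). -/
def ReachOutside (G : SimpleGraph V) (S : Set V) (u v : V) : Prop :=
  ∃ p : G.Walk u v, ∀ x ∈ p.support, x ∉ S

/-- Total weight of a vertex set. -/
noncomputable def setWeight [Finite V] (w : V → ℝ) (A : Set V) : ℝ :=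
  ∑ v ∈ (Set.toFinite A).toFinset, w v

/-- `S` is a `w`-balanced separator of `G`: every component of `G - S`
has weight at most half the total weight. -/
def IsBalancedSep [Finite V] (G : SimpleGraph V) (w : V → ℝ) (S : Set V) : Prop :=
  ∀ v, v ∉ S → setWeight w {u | ReachOutside G S u v} ≤ setWeight w (Set.univ : Set V) / 2

/-- Closed neighbourhood `N[A]` of a vertex set. -/
def closedNbhd (G : SimpleGraph V) (A : Set V) : Set V :=
  A ∪ {x | ∃ a ∈ A, G.Adj a x}

/-- `S` separates `A` from `B` in `G`: every walk from `A` to `B` meets `S`. -/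
def Separates (G : SimpleGraph V) (S A B : Set V) : Prop :=
  ∀ a ∈ A, ∀ b ∈ B, ∀ p : G.Walk a b, ∃ x ∈ p.support, x ∈ S

/-- `C` is (the vertex set of) an induced cycle of `G`: the induced subgraph is
connected and every vertex of `C` has exactly two neighbours in `C`. -/
def IsInducedCycle (G : SimpleGraph V) (C : Set V) : Prop :=
  (G.induce C).Connected ∧ ∀ x ∈ C, (G.neighborSet x ∩ C).ncard = 2

/-- `H` is an induced minor of `G`. -/
def IsInducedMinor {W : Type} (H : SimpleGraph W) (G : SimpleGraph V) : Prop :=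
  ∃ X : W → Set V,
    (∀ a, (G.induce (X a)).Connected) ∧
    (Pairwise fun a b => Disjoint (X a) (X b)) ∧
    ∀ a b, a ≠ b → ((∃ u ∈ X a, ∃ v ∈ X b, G.Adj u v) ↔ H.Adj a b)

/-- `H` is a minor of `G`. -/
def IsMinor {W : Type} (H : SimpleGraph W) (G : SimpleGraph V) : Prop :=
  ∃ X : W → Set V,
    (∀ a, (G.induce (X a)).Connected) ∧
    (Pairwise fun a b => Disjoint (X a) (X b)) ∧
    ∀ a b, H.Adj a b → ∃ u ∈ X a, ∃ v ∈ X b, G.Adj u v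

/-- The `ℓ`-wheel: a cycle of length `ℓ` plus a universal vertex (`none`). -/
def wheel (ℓ : ℕ) : SimpleGraph (Option (ZMod ℓ)) :=
  SimpleGraph.fromRel fun a b =>
    a = none ∨ b = none ∨ ∃ i : ZMod ℓ, a = some i ∧ b = some (i + 1)

/-- The `ℓ`-fan: a path on `ℓ` vertices plus a universal vertex (`none`). -/
def fan (ℓ : ℕ) : SimpleGraph (Option (Fin ℓ)) :=
  SimpleGraph.fromRel fun a b =>
    a = none ∨ b = none ∨ ∃ i j : Fin ℓ, a = some i ∧ b = some j ∧ (j : ℕ) = (i : ℕ) + 1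

/-! Grow an induced path `P` at its end `a`, keeping a component `C` of `G - N[P - a]` of more than
half the total weight that meets `N[a]`. If `N[P]` is not balanced, `G - N[P]` has such a heavy
component `C'`, and `C' ⊆ C` because two heavy sets meet. A walk in `C` from `N[a]` to `C'` leaves
`N[P]` for the last time at some `u ∈ N[P] \ N[P - a]`: a neighbour of `a` with no other neighbour on
`P`. Appending `u` keeps `P` induced and turns `N[P - a]` into `N[P]`, so the invariant passes to `C'`.
An induced path has fewer than `|V|` edges, so the growth stops at a balanced `N[P]`. -/

section setWeight
variable [Finite V] {w : V → ℝ}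

lemma setWeight_mono (hw0 : ∀ v, 0 ≤ w v) {A B : Set V} (h : A ⊆ B) :
    setWeight w A ≤ setWeight w B :=
  Finset.sum_le_sum_of_subset_of_nonneg (by simpa using h) fun v _ _ => hw0 v

lemma setWeight_add_setWeight_le (hw0 : ∀ v, 0 ≤ w v) {A B : Set V} (h : Disjoint A B) :
    setWeight w A + setWeight w B ≤ setWeight w (Set.univ : Set V) := by
  classical
  have hAB : setWeight w A + setWeight w B
      = ∑ v ∈ (Set.toFinite A).toFinset ∪ (Set.toFinite B).toFinset, w v :=
    (Finset.sum_union (by simpa using h)).symm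
  rw [hAB]
  exact Finset.sum_le_sum_of_subset_of_nonneg (by simp) fun v _ _ => hw0 v

end setWeight

namespace ReachOutside
variable {G : SimpleGraph V} {S : Set V} {u v x : V}

lemma refl (h : v ∉ S) : ReachOutside G S v v :=
  ⟨Walk.nil, by simpa using h⟩

lemma symm (h : ReachOutside G S u v) : ReachOutside G S v u := by
  obtain ⟨p, hp⟩ := h
  exact ⟨p.reverse, by simpa using hp⟩

lemma trans (h : ReachOutside G S u v) (h' : ReachOutside G S v x) :
    ReachOutside G S u x := by
  obtain ⟨p, hp⟩ := h
  obtain ⟨q, hq⟩ := h'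
  exact ⟨p.append q, fun y hy => (Walk.mem_support_append_iff p q).mp hy |>.elim (hp y) (hq y)⟩

lemma left_notMem (h : ReachOutside G S u v) : u ∉ S := by
  obtain ⟨p, hp⟩ := h
  exact hp u p.start_mem_support

lemma mono {S' : Set V} (hS : S ⊆ S') (h : ReachOutside G S' u v) : ReachOutside G S u v := by
  obtain ⟨p, hp⟩ := h
  exact ⟨p, fun y hy hyS => hp y hy (hS hyS)⟩

lemma cons (h : ReachOutside G S u v) (hxu : G.Adj x u) (hx : x ∉ S) :
    ReachOutside G S x v := by
  obtain ⟨p, hp⟩ := h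
  refine ⟨Walk.cons hxu p, ?_⟩
  simpa [hx] using hp

end ReachOutside

lemma SimpleGraph.Walk.reachOutside_or_exists_last_mem {G : SimpleGraph V} {S : Set V} {x y : V}
    (q : G.Walk x y) (hy : y ∉ S) :
    ReachOutside G S x y ∨
      ∃ u u', G.Adj u u' ∧ u ∈ S ∧ u ∈ q.support ∧ ReachOutside G S u' y := by
  induction q with
  | nil => exact Or.inl (ReachOutside.refl hy)
  | @cons a b _ hab q ih =>
    rcases ih hy with hr | ⟨u, u', hadj, huS, husupp, hr⟩
    · by_cases ha : a ∈ S
      · exact Or.inr ⟨a, b, hab, ha, by simp, hr⟩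
      · exact Or.inl (hr.cons hab ha)
    · exact Or.inr ⟨u, u', hadj, huS, by simp [husupp], hr⟩

lemma ReachOutside.of_heavy [Finite V] {G : SimpleGraph V} {w : V → ℝ} (hw0 : ∀ v, 0 ≤ w v)
    {T S : Set V} (hTS : T ⊆ S) {c c' : V}
    (hc : setWeight w Set.univ / 2 < setWeight w {u | ReachOutside G T u c})
    (hc' : setWeight w Set.univ / 2 < setWeight w {u | ReachOutside G S u c'}) :
    ReachOutside G T c' c := by
  by_contra hcc'
  have hdisj : Disjoint {u | ReachOutside G T u c} {u | ReachOutside G T u c'} :=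
    Set.disjoint_left.mpr fun z hz hz' => hcc' (hz'.symm.trans hz)
  have hsub : {u | ReachOutside G S u c'} ⊆ {u | ReachOutside G T u c'} :=
    fun x hx => ReachOutside.mono hTS hx
  linarith [setWeight_add_setWeight_le hw0 hdisj, setWeight_mono hw0 hsub]

lemma IsBalancedSep.mono [Finite V] {G : SimpleGraph V} {w : V → ℝ} (hw0 : ∀ v, 0 ≤ w v)
    {S S' : Set V} (hS : S ⊆ S') (h : IsBalancedSep G w S) : IsBalancedSep G w S' :=
  fun v hv => (setWeight_mono hw0 fun _ hx => ReachOutside.mono hS hx).trans (h v fun h' => hv (hS h'))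

section closedNbhd
variable {G : SimpleGraph V}

lemma closedNbhd_mono {A B : Set V} (h : A ⊆ B) : closedNbhd G A ⊆ closedNbhd G B := by
  rintro x (hx | ⟨a, ha, hadj⟩)
  · exact Or.inl (h hx)
  · exact Or.inr ⟨a, h ha, hadj⟩

@[simp] lemma mem_closedNbhd_singleton {a x : V} : x ∈ closedNbhd G {a} ↔ x = a ∨ G.Adj a x := by
  simp [closedNbhd]

lemma mem_closedNbhd_singleton_of_mem_diff {A : Set V} {a x : V}
    (hx : x ∈ closedNbhd G A) (hx' : x ∉ closedNbhd G (A \ {a})) : x = a ∨ G.Adj a x := by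
  rcases hx with hxA | ⟨y, hyA, hyx⟩
  · exact Or.inl (by_contra fun hxa => hx' (Or.inl ⟨hxA, hxa⟩))
  · exact Or.inr (by_contra fun hya => hx' (Or.inr ⟨y, ⟨hyA, fun h => hya (h ▸ hyx)⟩, hyx⟩))

end closedNbhd

namespace SimpleGraph.Walk
variable {G : SimpleGraph V}

def IsInducedPath {a b : V} (p : G.Walk a b) : Prop :=
  p.IsPath ∧ ∀ x ∈ p.support, ∀ y ∈ p.support, G.Adj x y → s(x, y) ∈ p.edges

lemma IsInducedPath.nil (a : V) : (nil : G.Walk a a).IsInducedPath :=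
  ⟨IsPath.nil, by simp⟩

lemma IsInducedPath.cons {u a b : V} {p : G.Walk a b} (hp : p.IsInducedPath) (hua : G.Adj u a)
    (hu : u ∉ closedNbhd G ({x | x ∈ p.support} \ {a})) : (cons hua p).IsInducedPath := by
  have hnbr : ∀ y ∈ p.support, G.Adj u y → y = a := fun y hy huy =>
    by_contra fun hya => hu (Or.inr ⟨y, ⟨hy, hya⟩, huy.symm⟩)
  have husupp : u ∉ p.support := fun h =>
    hu (Or.inl ⟨h, fun hua' => G.irrefl (hua' ▸ hua)⟩)
  refine ⟨hp.1.cons husupp, ?_⟩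
  simp only [support_cons, edges_cons, List.mem_cons]
  rintro x (rfl | hx) y (rfl | hy) hxy
  · exact absurd hxy G.irrefl
  · exact Or.inl (by rw [hnbr y hy hxy])
  · exact Or.inl (by rw [hnbr x hx hxy.symm, Sym2.eq_swap])
  · exact Or.inr (hp.2 x hx y hy hxy)

lemma setOf_mem_support_cons_diff {u a b : V}
    (hua : G.Adj u a) {p : G.Walk a b} (hu : u ∉ p.support) :
    {x | x ∈ (cons hua p).support} \ {u} = {x | x ∈ p.support} := by
  ext x
  simp only [support_cons, List.mem_cons, Set.mem_sdiff, Set.mem_ofPred_eq,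
    Set.mem_singleton_iff]
  exact ⟨fun ⟨hx, hxu⟩ => hx.resolve_left hxu, fun hx => ⟨Or.inr hx, fun h => hu (h ▸ hx)⟩⟩

end SimpleGraph.Walk

section chase
variable [Finite V]

def ChasesHeavyComponent (G : SimpleGraph V) (w : V → ℝ) {a b : V} (p : G.Walk a b) (c : V) :
    Prop :=
  p.IsInducedPath ∧
    setWeight w Set.univ / 2 <
      setWeight w {u | ReachOutside G (closedNbhd G ({x | x ∈ p.support} \ {a})) u c} ∧
    ∃ x ∈ closedNbhd G {a}, ReachOutside G (closedNbhd G ({x | x ∈ p.support} \ {a})) x c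

variable {G : SimpleGraph V} {w : V → ℝ}

lemma chasesHeavyComponent_nil {c : V}
    (hc : setWeight w Set.univ / 2 < setWeight w {u | ReachOutside G ∅ u c}) :
    ChasesHeavyComponent G w (Walk.nil : G.Walk c c) c := by
  have hempty : closedNbhd G ({x | x ∈ (Walk.nil : G.Walk c c).support} \ {c}) = ∅ := by
    simp [closedNbhd]
  rw [ChasesHeavyComponent, hempty]
  exact ⟨Walk.IsInducedPath.nil c, hc, c, by simp, ReachOutside.refl (Set.notMem_empty c)⟩

lemma ChasesHeavyComponent.exists_exit (hw0 : ∀ v, 0 ≤ w v) {a b c c' : V} {p : G.Walk a b}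
    (h : ChasesHeavyComponent G w p c) (hc' : c' ∉ closedNbhd G {x | x ∈ p.support})
    (hheavy' : setWeight w Set.univ / 2 <
      setWeight w {u | ReachOutside G (closedNbhd G {x | x ∈ p.support}) u c'}) :
    ∃ u, G.Adj a u ∧ u ∉ closedNbhd G ({x | x ∈ p.support} \ {a}) ∧
      ∃ u', G.Adj u u' ∧ ReachOutside G (closedNbhd G {x | x ∈ p.support}) u' c' := by
  obtain ⟨-, hheavy, x₀, hx₀a, hx₀c⟩ := h
  have hTS := closedNbhd_mono (G := G) (Set.sdiff_subset (s := {x | x ∈ p.support}) (t := {a}))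
  have hx₀S : x₀ ∈ closedNbhd G {x | x ∈ p.support} :=
    closedNbhd_mono (B := {x | x ∈ p.support}) (by simp) hx₀a
  obtain ⟨q, hq⟩ := hx₀c.trans (ReachOutside.of_heavy hw0 hTS hheavy hheavy').symm
  rcases q.reachOutside_or_exists_last_mem hc' with hr | ⟨u, u', huu', huS, huq, hu'c'⟩
  · exact absurd hx₀S hr.left_notMem
  rcases mem_closedNbhd_singleton_of_mem_diff huS (hq u huq) with rfl | hau
  · exact absurd (Or.inr ⟨u, p.start_mem_support, huu'⟩) hu'c'.left_notMem
  · exact ⟨u, hau, hq u huq, u', huu', hu'c'⟩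

lemma ChasesHeavyComponent.exists_cons (hw0 : ∀ v, 0 ≤ w v) {a b c : V} {p : G.Walk a b}
    (h : ChasesHeavyComponent G w p c)
    (hnot : ¬IsBalancedSep G w (closedNbhd G {x | x ∈ p.support})) :
    ∃ (u c' : V) (hua : G.Adj u a), ChasesHeavyComponent G w (Walk.cons hua p) c' := by
  simp only [IsBalancedSep, not_forall, not_le] at hnot
  obtain ⟨c', hc', hheavy'⟩ := hnot
  obtain ⟨u, hau, huT, u', huu', hu'c'⟩ := h.exists_exit hw0 hc' hheavy'
  have hcons := h.1.cons hau.symm huT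
  have hP := Walk.setOf_mem_support_cons_diff hau.symm
    ((Walk.cons_isPath_iff _ _).mp hcons.1).2
  refine ⟨u, c', hau.symm, hcons, ?_⟩
  rw [hP]
  exact ⟨hheavy', u', Or.inr ⟨u, rfl, huu'⟩, hu'c'⟩

end chase

/-- Gyárfás path: some induced path has a dominating balanced
separator as its closed neighbourhood. -/
theorem gyarfas_path [Finite V] [Nonempty V] (G : SimpleGraph V)
    (w : V → ℝ) (hw0 : ∀ v, 0 ≤ w v) :
    ∃ (a b : V) (p : G.Walk a b), p.IsPath ∧
      (∀ x ∈ p.support, ∀ y ∈ p.support, G.Adj x y → s(x, y) ∈ p.edges) ∧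
      IsBalancedSep G w (closedNbhd G {x | x ∈ p.support}) := by
  by_contra! hno
  have hno' {a b : V} (p : G.Walk a b) (hp : p.IsInducedPath) :
      ¬IsBalancedSep G w (closedNbhd G {x | x ∈ p.support}) := hno a b p hp.1 hp.2
  obtain ⟨c, hc⟩ : ∃ c,
      setWeight w Set.univ / 2 < setWeight w {u | ReachOutside G ∅ u c} := by
    have hempty : ¬IsBalancedSep G w ∅ := fun h =>
      hno' _ (Walk.IsInducedPath.nil (Classical.arbitrary V)) (h.mono hw0 (Set.empty_subset _))
    simpa only [IsBalancedSep, Set.notMem_empty, not_false_eq_true, forall_const, not_forall,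
      not_le] using hempty
  have hlong (n : ℕ) : ∃ (a b : V) (p : G.Walk a b) (c : V),
      ChasesHeavyComponent G w p c ∧ n ≤ p.length := by
    induction n with
    | zero => exact ⟨c, c, Walk.nil, c, chasesHeavyComponent_nil hc, le_rfl⟩
    | succ n ih =>
      obtain ⟨a, b, p, c, h, hn⟩ := ih
      obtain ⟨u, c', hua, h'⟩ := h.exists_cons hw0 (hno' p h.1)
      exact ⟨u, b, Walk.cons hua p, c', h', by simpa using hn⟩
  have := Fintype.ofFinite V
  obtain ⟨a, b, p, c, h, hn⟩ := hlong (Fintype.card V)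
  exact absurd h.1.1.length_lt (not_lt.mpr hn)
end

section
/- Let G be a cobweb with presentation (C, I) and σ a wedge-selection for (G, C, I). Then for all u, v ∈ I, the intersection graph σ(u) ∩ σ(v) has at most two connected components; moreover it has exactly two components if and only if u attaches to σ(v) and v attaches to σ(u). -/
open SimpleGraph

variable {V : Type}

/-- `G` is a cobweb with presentation `(C, I)`. -/
def IsCobweb (G : SimpleGraph V) (C I : Set V) : Prop :=
  IsInducedCycle G C ∧ I = Cᶜ ∧ I.Nonempty ∧
  (∀ u ∈ I, ∀ v ∈ I, ¬ G.Adj u v) ∧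
  (∀ v : V, 2 ≤ (G.neighborSet v).ncard) ∧
  ∀ u ∈ I, ∀ v ∈ I, u ≠ v → ¬ G.neighborSet u ⊆ G.neighborSet v

/-- A subgraph is a cycle: its coercion is connected and 2-regular. -/
def IsCycleSubgraph (G : SimpleGraph V) (W : G.Subgraph) : Prop :=
  W.coe.Connected ∧ ∀ x ∈ W.verts, (W.neighborSet x).ncard = 2

/-- `W` is a wedge of `(G, C, I)` anchored in `v`: a cycle containing exactly one
vertex of `I`, namely `v`, and exactly two neighbours of `v`. -/
def IsWedge (G : SimpleGraph V) (C I : Set V) (W : G.Subgraph) (v : V) : Prop :=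
  IsCycleSubgraph G W ∧ v ∈ I ∧ W.verts ∩ I = {v} ∧
  (W.verts ∩ G.neighborSet v).ncard = 2

/-- `u` attaches to the wedge `W`. -/
def Attaches (G : SimpleGraph V) (u : V) (W : G.Subgraph) : Prop :=
  u ∉ W.verts ∧ G.neighborSet u ⊆ W.verts

/-- The union of components of `G - V(W)` containing vertices of `C`
(for a non-co-trivial wedge this is the unique such component). -/
def outerPart (G : SimpleGraph V) (C : Set V) (W : G.Subgraph) : Set V :=
  {d | d ∉ W.verts ∧ ∃ c ∈ C, c ∉ W.verts ∧ ReachOutside G W.verts d c}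

open Classical in
/-- The barrier `∂W` of a wedge `W` anchored in `v`. -/
noncomputable def barrier (G : SimpleGraph V) (C : Set V) (W : G.Subgraph) (v : V) : Set V :=
  if C ⊆ W.verts then G.neighborSet v
  else {x | x ∉ outerPart G C W ∧ ∃ d ∈ outerPart G C W, G.Adj d x}

/-- `W₁` (a wedge anchored in `u`) improves `W₂` (a wedge anchored in `v`):
`W₁ - u` is a proper subgraph of `W₂ - v`. -/
def Improves (G : SimpleGraph V) (W₁ : G.Subgraph) (u : V) (W₂ : G.Subgraph) (v : V) : Prop :=
  W₁.deleteVerts {u} ≤ W₂.deleteVerts {v} ∧ W₁.deleteVerts {u} ≠ W₂.deleteVerts {v}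

/-- A vertex is good w.r.t. a wedge-selection `σ` if it is minimal in the
improvement order. -/
def GoodVertex (G : SimpleGraph V) (I : Set V) (σ : V → G.Subgraph) (u : V) : Prop :=
  u ∈ I ∧ ∀ x ∈ I, ¬ Improves G (σ x) x (σ u) u

/-!
Label the induced cycle `C` by `ZMod n`. A wedge anchored in `w` is 2-regular and meets `I` only
in `w`, so by counting degrees exactly one vertex `a` of `C ∩ V(W)` lacks its predecessor edge;
hence `W - w` is the arc `a, a + 1, …, a + ℓ - 1` of `C`, traversed by its consecutive edges, and
`w` is joined to its two ends.

For wedges over the arcs starting at `a` and at `c`, the intersection graph is the intersection of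
the two arcs with the edges entering `a` and `c` removed. Walking backwards from any of its
vertices one stays inside it until reaching `a` or `c`, and the side of the splitting of the cycle
into `[a, c)` and `[c, a)` does not change along its edges. So there are at most two components,
and exactly two when each arc contains the start of the other and `a ≠ c`. This last condition is
mutual attachment: when `a = c`, mutual attachment forces the two arcs to coincide, and then `u`
and `v` have the same neighbourhood, which a cobweb forbids.
-/

namespace SimpleGraph

variable {X : Type*} {H : SimpleGraph X}

lemma Reachable.eq_of_adj_imp_eq {β : Sort*} {f : X → β} (hf : ∀ ⦃x y⦄, H.Adj x y → f x = f y)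
    {x y : X} (h : H.Reachable x y) : f x = f y := by
  obtain ⟨p⟩ := h
  induction p with
  | nil => rfl
  | cons hxy _ ih => exact (hf hxy).trans ih

lemma card_connectedComponent_eq_card_range {β : Type*} (f : X → β)
    (hadj : ∀ ⦃x y⦄, H.Adj x y → f x = f y) (hreach : ∀ ⦃x y⦄, f x = f y → H.Reachable x y) :
    Nat.card H.ConnectedComponent = Nat.card (Set.range f) := by
  refine Nat.card_congr (Equiv.ofBijective (ConnectedComponent.lift (fun x ↦ ⟨f x, x, rfl⟩)
    fun _ _ p _ ↦ Subtype.ext (p.reachable.eq_of_adj_imp_eq hadj)) ⟨?_, ?_⟩)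
  · exact ConnectedComponent.ind₂ fun x y h ↦
      ConnectedComponent.sound (hreach (congrArg Subtype.val h))
  · rintro ⟨_, x, rfl⟩
    exact ⟨H.connectedComponentMk x, rfl⟩

lemma card_connectedComponent_of_iff_invariant (f : X → Prop)
    (hadj : ∀ ⦃x y⦄, H.Adj x y → (f x ↔ f y)) (hreach : ∀ ⦃x y⦄, (f x ↔ f y) → H.Reachable x y) :
    Nat.card H.ConnectedComponent ≤ 2 ∧
      (Nat.card H.ConnectedComponent = 2 ↔ (∃ x, f x) ∧ ∃ x, ¬ f x) := by
  rw [card_connectedComponent_eq_card_range f (fun x y h ↦ propext (hadj h))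
    (fun x y h ↦ hreach (Iff.of_eq h)), Nat.card_coe_set_eq]
  have huniv : (Set.univ : Set Prop).ncard = 2 := by
    rw [Set.ncard_univ, Nat.card_eq_fintype_card, Fintype.card_prop]
  have hle : (Set.range f).ncard ≤ 2 := huniv ▸ Set.ncard_le_ncard (Set.subset_univ _)
  refine ⟨hle, fun h ↦ ?_, fun ⟨⟨x, hx⟩, y, hy⟩ ↦ le_antisymm hle ?_⟩
  · have hrange := Set.eq_of_subset_of_ncard_le (Set.subset_univ _) (huniv.trans h.symm).le
    obtain ⟨x, hx⟩ : True ∈ Set.range f := hrange ▸ trivial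
    obtain ⟨y, hy⟩ : False ∈ Set.range f := hrange ▸ trivial
    exact ⟨⟨x, hx ▸ trivial⟩, y, hy ▸ id⟩
  · have hsub : ({True, False} : Set Prop) ⊆ Set.range f := by
      rintro _ (rfl | rfl)
      exacts [⟨x, eq_true hx⟩, ⟨y, eq_false hy⟩]
    simpa [Set.ncard_pair true_ne_false] using Set.ncard_le_ncard hsub

lemma ncard_neighborSet_induce {G : SimpleGraph V} {C : Set V} (x : C) :
    ((G.induce C).neighborSet x).ncard = (G.neighborSet x ∩ C).ncard := by
  rw [← Set.ncard_image_of_injective _ Subtype.val_injective]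
  congr 1
  ext y
  exact ⟨fun ⟨z, hz, hzy⟩ ↦ hzy ▸ ⟨hz, z.2⟩, fun ⟨hy, hyC⟩ ↦ ⟨⟨y, hyC⟩, hy, rfl⟩⟩

end SimpleGraph

namespace ZMod

variable {n : ℕ}

def arc (a : ZMod n) (ℓ : ℕ) : Set (ZMod n) := {x | (x - a).val < ℓ}

@[simp] lemma mem_arc {a x : ZMod n} {ℓ : ℕ} : x ∈ arc a ℓ ↔ (x - a).val < ℓ := Iff.rfl

lemma val_sub_pos_iff_ne {x a : ZMod n} : 0 < (x - a).val ↔ x ≠ a := by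
  rw [Nat.pos_iff_ne_zero, Ne, ZMod.val_eq_zero, sub_eq_zero]

lemma add_one_ne_sub_one (hn : 3 ≤ n) (p : ZMod n) : p + 1 ≠ p - 1 := by
  intro h
  have h2 : ((2 : ℕ) : ZMod n) = 0 := by push_cast; linear_combination h
  have := Nat.le_of_dvd two_pos ((ZMod.natCast_eq_zero_iff 2 n).mp h2)
  omega

lemma exists_val_sub_eq (a : ZMod n) {k : ℕ} (hk : k < n) : ∃ x : ZMod n, (x - a).val = k :=
  ⟨a + k, by simp [ZMod.val_cast_of_lt hk]⟩

/-- The first of `a` and `c` met when walking backwards from `x`. -/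
def anchor (a c x : ZMod n) : ZMod n := if (x - a).val < (c - a).val then a else c

lemma anchor_eq_left {a c x : ZMod n} (h : (x - a).val < (c - a).val) : anchor a c x = a :=
  if_pos h

lemma anchor_eq_right {a c x : ZMod n} (h : ¬ (x - a).val < (c - a).val) : anchor a c x = c :=
  if_neg h

lemma anchor_congr {a c x y : ZMod n}
    (h : (x - a).val < (c - a).val ↔ (y - a).val < (c - a).val) : anchor a c x = anchor a c y := by
  simp only [anchor, h]

lemma anchor_left (a c : ZMod n) : anchor a c a = a := by
  by_cases h : 0 < (c - a).val
  · simpa using anchor_eq_left (x := a) (by simpa using h)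
  · rw [anchor_eq_right (by simpa using h)]
    exact sub_eq_zero.mp ((ZMod.val_eq_zero _).mp (by omega))

lemma anchor_right (a c : ZMod n) : anchor a c c = c := anchor_eq_right (lt_irrefl _)

variable [NeZero n]

lemma val_sub_eq_iff_eq {x y a : ZMod n} : (x - a).val = (y - a).val ↔ x = y :=
  (ZMod.val_injective n).eq_iff.trans sub_left_inj

lemma val_sub_add_val_sub_of_ne {a c : ZMod n} (h : a ≠ c) : (a - c).val + (c - a).val = n := by
  have : NeZero (a - c) := ⟨sub_ne_zero.mpr h⟩
  rw [← neg_sub a c, ZMod.val_neg_of_ne_zero]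
  have := (a - c).val_lt
  omega

lemma val_sub_add_val_sub (x a c : ZMod n) :
    (x - c).val = (x - a).val + (a - c).val ∨ (x - c).val + n = (x - a).val + (a - c).val := by
  have hsum : x - c = (x - a) + (a - c) := by ring
  rcases lt_or_ge ((x - a).val + (a - c).val) n with h | h
  · exact .inl (hsum ▸ ZMod.val_add_of_lt h)
  · right
    rw [hsum, ZMod.val_add_val_of_le h]

lemma val_sub_one_sub_add_one {x a : ZMod n} (h : x ≠ a) : (x - 1 - a).val + 1 = (x - a).val := by
  have hpos := val_sub_pos_iff_ne.mpr h
  have h₁ : (1 : ZMod n).val = 1 := by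
    rw [ZMod.val_one_eq_one_mod]
    exact Nat.mod_eq_of_lt (by have := (x - a).val_lt; omega)
  rw [show x - 1 - a = (x - a) - 1 by ring, ZMod.val_sub (h₁ ▸ hpos)]
  omega

lemma val_add_one_sub {x a : ZMod n} (h : x + 1 ≠ a) : (x + 1 - a).val = (x - a).val + 1 := by
  simpa using (val_sub_one_sub_add_one h).symm

lemma add_one_mem_arc_and_ne_iff {x a : ZMod n} {ℓ : ℕ} (hℓ : ℓ ≤ n) :
    x + 1 ∈ arc a ℓ ∧ x + 1 ≠ a ↔ (x - a).val + 1 < ℓ := by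
  by_cases hxa : x + 1 = a
  · have : (x - a).val + 1 = n := by
      obtain ⟨k, rfl⟩ : ∃ k, n = k + 1 := ⟨n - 1, (Nat.succ_pred_eq_of_pos (NeZero.pos n)).symm⟩
      rw [← hxa, show x - (x + 1) = -1 by ring, ZMod.val_neg_one k]
    simp only [hxa, ne_eq, not_true_eq_false, and_false, false_iff]
    omega
  · simp [hxa, val_add_one_sub hxa]

lemma val_sub_one_sub_lt_iff {a c x : ZMod n} (hxa : x ≠ a) (hxc : x ≠ c) :
    (x - 1 - a).val < (c - a).val ↔ (x - a).val < (c - a).val := by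
  have h₁ := val_sub_one_sub_add_one hxa
  have h₂ : (x - a).val ≠ (c - a).val := fun h ↦ hxc (val_sub_eq_iff_eq.mp h)
  omega

lemma anchor_sub_one {a c x : ZMod n} (hxa : x ≠ a) (hxc : x ≠ c) :
    anchor a c (x - 1) = anchor a c x := by
  simp only [anchor, val_sub_one_sub_lt_iff hxa hxc]

lemma exists_eq_arc_of_sub_one_mem {A : Set (ZMod n)} {a : ZMod n} (ha : a ∈ A)
    (h : ∀ x ∈ A, x ≠ a → x - 1 ∈ A) : ∃ ℓ ≤ n, A = arc a ℓ := by
  set J := (fun x ↦ (x - a).val) '' A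
  have hJ : IsLowerSet J := by
    suffices ∀ j, ∀ x ∈ A, (x - a).val = j → ∀ i ≤ j, i ∈ J by
      rintro _ i hi ⟨x, hx, rfl⟩
      exact this _ x hx rfl i hi
    intro j
    induction j with
    | zero => exact fun _ _ _ i hi ↦ ⟨a, ha, by simp only [sub_self, ZMod.val_zero]; omega⟩
    | succ j ih =>
      intro x hx hxj i hi
      rcases hi.lt_or_eq with hi | rfl
      · have hxa : x ≠ a := val_sub_pos_iff_ne.mp (by omega)
        exact ih (x - 1) (h x hx hxa) (by have := val_sub_one_sub_add_one hxa; omega) i (by omega)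
      · exact ⟨x, hx, hxj⟩
  obtain ⟨ℓ, hℓ⟩ := hJ.eq_univ_or_Iio.resolve_left fun huniv ↦ by
    obtain ⟨x, -, hx⟩ : n ∈ J := huniv ▸ Set.mem_univ n
    exact (x - a).val_lt.ne hx
  have hmem : ∀ x, x ∈ A ↔ (x - a).val < ℓ := fun x ↦ by
    rw [← Set.mem_Iio, ← hℓ]
    exact ⟨Set.mem_image_of_mem _, fun ⟨y, hy, hyx⟩ ↦ val_sub_eq_iff_eq.mp hyx ▸ hy⟩
  refine ⟨ℓ, ?_, Set.ext hmem⟩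
  by_contra! hnℓ
  obtain ⟨x, -, hx⟩ : n ∈ J := hℓ ▸ hnℓ
  exact (x - a).val_lt.ne hx

lemma mem_arc_or_mem_arc {a c : ZMod n} {ℓ m : ℕ} (hac : a ≠ c)
    (ha : a ∈ arc c m) (hc : c ∈ arc a ℓ) (x : ZMod n) : x ∈ arc a ℓ ∨ x ∈ arc c m := by
  simp only [mem_arc] at *
  have := val_sub_add_val_sub_of_ne hac
  have := (x - a).val_lt
  have := (x - c).val_lt
  rcases val_sub_add_val_sub x c a with h | h <;> omega

lemma mem_arc_of_val_sub_add_one_eq {a c x : ZMod n} {ℓ m : ℕ} (hℓ : ℓ ≤ n) (hac : a ≠ c)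
    (ha : a ∈ arc c m) (hc : c ∈ arc a ℓ) (hx : (x - a).val + 1 = ℓ) : x ∈ arc c m := by
  simp only [mem_arc] at *
  have := val_sub_add_val_sub_of_ne hac
  have := val_sub_pos_iff_ne.mpr hac
  have := (x - c).val_lt
  rcases val_sub_add_val_sub x a c with h | h <;> omega

lemma forall_mem_arc_and_forall_mem_arc_iff {N₁ N₂ : ZMod n → Prop} {a c : ZMod n} {ℓ m : ℕ}
    (hℓ : ℓ ≤ n) (hm : m ≤ n)
    (hN₁ : ∀ x, N₁ x ∧ x ∈ arc a ℓ ↔ x = a ∨ (x - a).val + 1 = ℓ)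
    (hN₂ : ∀ x, N₂ x ∧ x ∈ arc c m ↔ x = c ∨ (x - c).val + 1 = m)
    (hsub : ¬ ∀ x, N₁ x → N₂ x) :
    ((∀ x, N₁ x → x ∈ arc c m) ∧ ∀ x, N₂ x → x ∈ arc a ℓ) ↔
      a ∈ arc c m ∧ c ∈ arc a ℓ ∧ a ≠ c := by
  constructor
  · rintro ⟨h₁, h₂⟩
    have ha := h₁ a ((hN₁ a).mpr (.inl rfl)).1
    have hc := h₂ c ((hN₂ c).mpr (.inl rfl)).1
    refine ⟨ha, hc, ?_⟩
    -- for `a = c` the far ends of the arcs lie in each other's arc, so `ℓ = m` and `N₁ ⊆ N₂`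
    rintro rfl
    have hℓ0 : 0 < ℓ := (Nat.zero_le _).trans_lt hc
    have hm0 : 0 < m := (Nat.zero_le _).trans_lt ha
    obtain ⟨x, hx⟩ := exists_val_sub_eq a (k := ℓ - 1) (by omega)
    obtain ⟨y, hy⟩ := exists_val_sub_eq a (k := m - 1) (by omega)
    have hxm : (x - a).val < m := h₁ x ((hN₁ x).mpr (.inr (by omega))).1
    have hyℓ : (y - a).val < ℓ := h₂ y ((hN₂ y).mpr (.inr (by omega))).1
    obtain rfl : ℓ = m := by omega
    exact hsub fun z hz ↦ ((hN₂ z).mpr ((hN₁ z).mp ⟨hz, h₁ z hz⟩)).1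
  · rintro ⟨ha, hc, hac⟩
    refine ⟨fun x hx ↦ ?_, fun x hx ↦ ?_⟩
    · by_cases hxa : x ∈ arc a ℓ
      · rcases (hN₁ x).mp ⟨hx, hxa⟩ with rfl | hlast
        exacts [ha, mem_arc_of_val_sub_add_one_eq hℓ hac ha hc hlast]
      · exact (mem_arc_or_mem_arc hac ha hc x).resolve_left hxa
    · by_cases hxc : x ∈ arc c m
      · rcases (hN₂ x).mp ⟨hx, hxc⟩ with rfl | hlast
        exacts [hc, mem_arc_of_val_sub_add_one_eq hm (Ne.symm hac) hc ha hlast]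
      · exact (mem_arc_or_mem_arc hac ha hc x).resolve_right hxc

end ZMod

structure IsCyclicLabelling (G : SimpleGraph V) (C : Set V) {n : ℕ} (e : ZMod n → V) : Prop where
  three_le : 3 ≤ n
  injective : Function.Injective e
  range_eq : Set.range e = C
  adj_iff : ∀ p q, G.Adj (e p) (e q) ↔ q = p + 1 ∨ p = q + 1

section Labelling

variable {G : SimpleGraph V} {C : Set V} {n : ℕ} {e : ZMod n → V}

lemma IsCyclicLabelling.neZero (he : IsCyclicLabelling G C e) : NeZero n :=
  ⟨by have := he.three_le; omega⟩

lemma IsCyclicLabelling.mem (he : IsCyclicLabelling G C e) (x : ZMod n) : e x ∈ C :=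
  he.range_eq ▸ Set.mem_range_self x

lemma IsCyclicLabelling.exists_eq (he : IsCyclicLabelling G C e) {y : V} (hy : y ∈ C) :
    ∃ x, e x = y := by
  rwa [← he.range_eq] at hy

end Labelling

lemma SimpleGraph.Connected.exists_isCyclicLabelling {X : Type} [Finite X] {H : SimpleGraph X}
    (hconn : H.Connected) (hdeg : ∀ x, (H.neighborSet x).ncard = 2) :
    ∃ (n : ℕ) (e : ZMod n → X), IsCyclicLabelling H Set.univ e := by
  have hcyc : H.IsCycles := fun x _ ↦ hdeg x
  obtain ⟨x₀⟩ := hconn.nonempty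
  obtain ⟨p, hp, hverts⟩ := hcyc.exists_cycle_toSubgraph_verts_eq_connectedComponentSupp
    (c := H.connectedComponentMk x₀) rfl (Set.nonempty_of_ncard_ne_zero (by rw [hdeg x₀]; omega))
  set n := p.length
  have hn : 3 ≤ n := hp.three_le_length
  have : NeZero n := ⟨by omega⟩
  set e : ZMod n → X := fun i ↦ p.getVert i.val
  have he_natCast : ∀ k ≤ n, e k = p.getVert k := by
    intro k hk
    rcases hk.lt_or_eq with hk | rfl
    · simp [e, ZMod.val_cast_of_lt hk]
    · simp only [e, ZMod.natCast_self, ZMod.val_zero, Walk.getVert_zero]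
      exact p.getVert_length.symm
  have hstep : ∀ i, H.Adj (e i) (e (i + 1)) := by
    intro i
    have := p.adj_getVert_succ i.val_lt
    rwa [← he_natCast _ i.val_lt.le, ← he_natCast _ i.val_lt, ZMod.natCast_zmod_val,
      Nat.cast_succ, ZMod.natCast_zmod_val] at this
  have hinj : Function.Injective e := fun i j h ↦
    ZMod.val_injective n
      (hp.getVert_injOn' (Nat.le_sub_one_of_lt i.val_lt) (Nat.le_sub_one_of_lt j.val_lt) h)
  refine ⟨n, e, hn, hinj, Set.eq_univ_of_forall fun y ↦ ?_, fun i j ↦ ⟨fun h ↦ ?_, ?_⟩⟩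
  · have : y ∈ p.support := by
      rw [← p.mem_verts_toSubgraph, hverts, ConnectedComponent.mem_supp_iff,
        ConnectedComponent.eq]
      exact hconn.preconnected y x₀
    obtain ⟨k, hk, hkn⟩ := p.mem_support_iff_exists_getVert.mp this
    exact ⟨k, (he_natCast k hkn).trans hk⟩
  · refine or_iff_not_imp_left.mpr fun hji ↦ ?_
    -- `e (i - 1)` and `e j` are both neighbours of `e i` other than `e (i + 1)`
    have hpred : H.Adj (e i) (e (i - 1)) := by simpa using (hstep (i - 1)).symm
    have := (hcyc.existsUnique_ne_adj (hstep i)).unique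
      ⟨fun h' ↦ hji (hinj h').symm, h⟩
      ⟨fun h' ↦ ZMod.add_one_ne_sub_one hn i (hinj h'), hpred⟩
    rw [hinj this]
    ring
  · rintro (rfl | rfl)
    exacts [hstep i, (hstep j).symm]

lemma IsInducedCycle.exists_isCyclicLabelling [Finite V] {G : SimpleGraph V} {C : Set V}
    (hC : IsInducedCycle G C) : ∃ (n : ℕ) (e : ZMod n → V), IsCyclicLabelling G C e := by
  obtain ⟨n, e, he⟩ := hC.1.exists_isCyclicLabelling fun x ↦
    (ncard_neighborSet_induce x).trans (hC.2 x x.2)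
  refine ⟨n, Subtype.val ∘ e, he.three_le, Subtype.val_injective.comp he.injective, ?_,
    fun p q ↦ he.adj_iff p q⟩
  rw [Set.range_comp, he.range_eq, Set.image_univ, Subtype.range_coe]

section Wedge

variable {G : SimpleGraph V} {C : Set V} {n : ℕ} {e : ZMod n → V} {W : G.Subgraph} {w : V}

lemma IsCyclicLabelling.neighborSet_subset (he : IsCyclicLabelling G C e) (hw : w ∉ C)
    (hverts : W.verts ⊆ insert w C) (x : ZMod n) :
    W.neighborSet (e x) ⊆ {w, e (x - 1), e (x + 1)} := by
  intro y hy
  obtain rfl | hyC := hverts (W.edge_vert hy.symm)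
  · exact .inl rfl
  obtain ⟨z, rfl⟩ := he.exists_eq hyC
  rcases (he.adj_iff x z).mp (W.adj_sub hy) with rfl | rfl
  · exact .inr (.inr rfl)
  · exact .inr (.inl (by ring_nf))

open Classical in
lemma IsCyclicLabelling.adj_indicator_sum_eq (he : IsCyclicLabelling G C e) (hw : w ∉ C)
    (hverts : W.verts ⊆ insert w C) (hdeg : ∀ y ∈ W.verts, (W.neighborSet y).ncard = 2)
    (x : ZMod n) :
    (if W.Adj w (e x) then 1 else 0) + (if W.Adj (e (x - 1)) (e x) then 1 else 0) +
      (if W.Adj (e x) (e (x + 1)) then 1 else 0) = if e x ∈ W.verts then 2 else 0 := by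
  by_cases hx : e x ∈ W.verts
  · have hne : e (x - 1) ≠ e (x + 1) := fun h ↦
      ZMod.add_one_ne_sub_one he.three_le x (he.injective h).symm
    have hnbr : W.neighborSet (e x) =
        ↑(({w, e (x - 1), e (x + 1)} : Finset V).filter (W.Adj (e x))) := by
      ext y
      simp only [Finset.coe_filter, Finset.mem_insert, Finset.mem_singleton]
      exact ⟨fun hy ↦ ⟨he.neighborSet_subset hw hverts x hy, hy⟩, fun hy ↦ hy.2⟩
    have := hdeg _ hx
    rw [hnbr, Set.ncard_coe_finset, Finset.card_filter, Finset.sum_insert, Finset.sum_insert,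
      Finset.sum_singleton] at this
    · simp only [W.adj_comm (e x) w, W.adj_comm (e x) (e (x - 1)), if_pos hx] at this ⊢
      omega
    · simpa using hne
    · simp only [Finset.mem_insert, Finset.mem_singleton, not_or]
      exact ⟨fun h ↦ hw (h ▸ he.mem _), fun h ↦ hw (h ▸ he.mem _)⟩
  · have h₁ : ¬ W.Adj w (e x) := fun h ↦ hx h.snd_mem
    have h₂ : ¬ W.Adj (e (x - 1)) (e x) := fun h ↦ hx h.snd_mem
    have h₃ : ¬ W.Adj (e x) (e (x + 1)) := fun h ↦ hx h.fst_mem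
    simp [hx, h₁, h₂, h₃]

open Classical in
lemma IsCyclicLabelling.card_filter_adj (he : IsCyclicLabelling G C e) (hw : w ∉ C)
    (hverts : W.verts ⊆ insert w C) (hwW : w ∈ W.verts)
    (hdeg : ∀ y ∈ W.verts, (W.neighborSet y).ncard = 2) [Fintype (ZMod n)] :
    (Finset.univ.filter fun x ↦ W.Adj w (e x)).card = 2 := by
  have himage : W.neighborSet w = e '' ↑(Finset.univ.filter fun x ↦ W.Adj w (e x)) := by
    ext y
    refine ⟨fun hy ↦ ?_, fun ⟨x, hx, hxy⟩ ↦ hxy ▸ by simpa using hx⟩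
    obtain rfl | hyC := hverts hy.snd_mem
    · exact absurd (W.adj_sub hy) G.irrefl
    obtain ⟨x, rfl⟩ := he.exists_eq hyC
    exact ⟨x, by simpa using hy, rfl⟩
  rw [← hdeg w hwW, himage, Set.ncard_image_of_injective _ he.injective, Set.ncard_coe_finset]

/-- Summing `adj_indicator_sum_eq` over the cycle: the two edges at `w` leave room for exactly
one vertex of `C ∩ V(W)` without its predecessor edge. -/
lemma IsCyclicLabelling.exists_adj_sub_one_iff (he : IsCyclicLabelling G C e) (hw : w ∉ C)
    (hverts : W.verts ⊆ insert w C) (hwW : w ∈ W.verts)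
    (hdeg : ∀ y ∈ W.verts, (W.neighborSet y).ncard = 2) :
    ∃ a, e a ∈ W.verts ∧ ∀ x, W.Adj (e (x - 1)) (e x) ↔ e x ∈ W.verts ∧ x ≠ a := by
  classical
  have := he.neZero
  set A := Finset.univ.filter fun x ↦ e x ∈ W.verts
  set E := Finset.univ.filter fun x ↦ W.Adj (e (x - 1)) (e x)
  have hEA : E ⊆ A := fun x hx ↦ by simpa [A] using (Finset.mem_filter.mp hx).2.snd_mem
  have hsum : 2 + E.card + E.card = 2 * A.card := by
    have hshift : ∑ x, (if W.Adj (e x) (e (x + 1)) then 1 else 0) = E.card := by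
      rw [Finset.card_filter]
      exact Fintype.sum_equiv (Equiv.addRight 1) _ _ fun x ↦ by simp
    have := Finset.sum_congr rfl fun x (_ : x ∈ Finset.univ) ↦
      he.adj_indicator_sum_eq hw hverts hdeg x
    rw [Finset.sum_add_distrib, Finset.sum_add_distrib, hshift, ← Finset.card_filter,
      ← Finset.card_filter, he.card_filter_adj hw hverts hwW hdeg, Finset.sum_ite,
      Finset.sum_const_zero] at this
    simpa [A, mul_comm] using this
  obtain ⟨a, ha⟩ : ∃ a, A \ E = {a} := by
    rw [← Finset.card_eq_one, Finset.card_sdiff_of_subset hEA]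
    omega
  refine ⟨a, ?_, fun x ↦ ?_⟩
  · have haA : a ∈ A := (Finset.mem_sdiff.mp (ha ▸ Finset.mem_singleton_self a)).1
    simpa [A] using haA
  · have hxa := Finset.ext_iff.mp ha x
    rw [Finset.mem_sdiff, Finset.mem_singleton] at hxa
    have := @hEA x
    simp only [A, E, Finset.mem_filter, Finset.mem_univ, true_and] at hxa this ⊢
    tauto

structure IsArcWedge (e : ZMod n → V) (W : G.Subgraph) (w : V) (a : ZMod n) (ℓ : ℕ) : Prop where
  two_le : 2 ≤ ℓ
  le : ℓ ≤ n
  mem_verts_iff : ∀ x, e x ∈ W.verts ↔ x ∈ ZMod.arc a ℓ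
  adj_sub_one_iff : ∀ x, W.Adj (e (x - 1)) (e x) ↔ x ∈ ZMod.arc a ℓ ∧ x ≠ a
  adj_iff : ∀ x, W.Adj w (e x) ↔ x = a ∨ (x - a).val + 1 = ℓ

lemma IsCyclicLabelling.exists_isArcWedge (he : IsCyclicLabelling G C e) (hw : w ∉ C)
    (hverts : W.verts ⊆ insert w C) (hwW : w ∈ W.verts)
    (hdeg : ∀ y ∈ W.verts, (W.neighborSet y).ncard = 2) : ∃ a ℓ, IsArcWedge e W w a ℓ := by
  classical
  have := he.neZero
  obtain ⟨a, haW, hE⟩ := he.exists_adj_sub_one_iff hw hverts hwW hdeg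
  obtain ⟨ℓ, hℓn, hA⟩ := ZMod.exists_eq_arc_of_sub_one_mem (A := {x | e x ∈ W.verts}) haW
    fun x hx hxa ↦ ((hE x).mpr ⟨hx, hxa⟩).fst_mem
  have hmem : ∀ x, e x ∈ W.verts ↔ x ∈ ZMod.arc a ℓ := fun x ↦ Set.ext_iff.mp hA x
  have hprev : ∀ x, W.Adj (e (x - 1)) (e x) ↔ x ∈ ZMod.arc a ℓ ∧ x ≠ a := fun x ↦ by
    rw [hE, hmem]
  have hnext : ∀ x, W.Adj (e x) (e (x + 1)) ↔ (x - a).val + 1 < ℓ := fun x ↦ by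
    rw [← ZMod.add_one_mem_arc_and_ne_iff hℓn, ← hprev, add_sub_cancel_right]
  have hcount : ∀ x ∈ ZMod.arc a ℓ, (if W.Adj w (e x) then 1 else 0) + (if x = a then 0 else 1) +
      (if (x - a).val + 1 < ℓ then 1 else 0) = 2 := fun x hx ↦ by
    simpa [hprev, hnext, hmem, hx, ite_not] using he.adj_indicator_sum_eq hw hverts hdeg x
  have haℓ : a ∈ ZMod.arc a ℓ := (hmem a).mp haW
  have hℓ : 2 ≤ ℓ := by
    have := hcount a haℓ
    simp only [if_true, sub_self, ZMod.val_zero, zero_add] at this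
    split_ifs at this <;> omega
  refine ⟨a, ℓ, hℓ, hℓn, hmem, hprev, fun x ↦ ?_⟩
  by_cases hx : x ∈ ZMod.arc a ℓ
  · have h := hcount x hx
    rw [ZMod.mem_arc] at hx
    rcases eq_or_ne x a with rfl | hxa
    · simp only [if_true, sub_self, ZMod.val_zero, zero_add] at h
      rw [if_pos (by omega : 1 < ℓ)] at h
      simp only [true_or, iff_true]
      by_contra h₁
      rw [if_neg h₁] at h
      omega
    · have := ZMod.val_sub_pos_iff_ne.mpr hxa
      simp only [hxa, if_false, false_or] at h ⊢
      constructor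
      · intro h₁
        rw [if_pos h₁] at h
        split_ifs at h <;> omega
      · intro hlast
        by_contra h₁
        rw [if_neg h₁, if_neg (by omega)] at h
        omega
  · have h₁ : ¬ W.Adj w (e x) := fun h ↦ hx ((hmem x).mp h.snd_mem)
    rw [ZMod.mem_arc] at hx haℓ
    simp only [h₁, false_iff, not_or]
    refine ⟨?_, by omega⟩
    rintro rfl
    exact hx haℓ

end Wedge

section Intersection

variable {G : SimpleGraph V} {C : Set V} {n : ℕ} {e : ZMod n → V} {W₁ W₂ : G.Subgraph}
  {w₁ w₂ : V} {a c : ZMod n} {ℓ m : ℕ}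

lemma IsArcWedge.mem_arc_self (hA : IsArcWedge e W₁ w₁ a ℓ) : a ∈ ZMod.arc a ℓ := by
  simpa using zero_lt_two.trans_le hA.two_le

lemma IsArcWedge.inf_adj_sub_one_iff (hA : IsArcWedge e W₁ w₁ a ℓ) (hB : IsArcWedge e W₂ w₂ c m)
    (x : ZMod n) : (W₁ ⊓ W₂).Adj (e (x - 1)) (e x) ↔
      (x ∈ ZMod.arc a ℓ ∧ x ≠ a) ∧ x ∈ ZMod.arc c m ∧ x ≠ c :=
  (hA.adj_sub_one_iff x).and (hB.adj_sub_one_iff x)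

lemma IsArcWedge.exists_reachable_anchor [NeZero n] (hA : IsArcWedge e W₁ w₁ a ℓ)
    (hB : IsArcWedge e W₂ w₂ c m) (x : ZMod n) (hx : e x ∈ (W₁ ⊓ W₂).verts) :
    ∃ t : (W₁ ⊓ W₂).verts, t.val = e (ZMod.anchor a c x) ∧
      (W₁ ⊓ W₂).coe.Reachable ⟨e x, hx⟩ t := by
  induction hk : (x - a).val generalizing x with
  | zero =>
    obtain rfl : x = a := sub_eq_zero.mp ((ZMod.val_eq_zero _).mp hk)
    exact ⟨⟨e x, hx⟩, by rw [ZMod.anchor_left], .rfl⟩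
  | succ k ih =>
    have hxa : x ≠ a := ZMod.val_sub_pos_iff_ne.mp (by omega)
    by_cases hxc : x = c
    · subst hxc
      exact ⟨⟨e x, hx⟩, by rw [ZMod.anchor_right], .rfl⟩
    have hadj : (W₁ ⊓ W₂).Adj (e (x - 1)) (e x) :=
      (hA.inf_adj_sub_one_iff hB x).mpr
        ⟨⟨(hA.mem_verts_iff x).mp hx.1, hxa⟩, (hB.mem_verts_iff x).mp hx.2, hxc⟩
    obtain ⟨t, ht, hr⟩ := ih (x - 1) hadj.fst_mem
      (by have := ZMod.val_sub_one_sub_add_one hxa; omega)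
    exact ⟨t, ht.trans (congrArg e (ZMod.anchor_sub_one hxa hxc)),
      (show (W₁ ⊓ W₂).coe.Adj ⟨_, hadj.fst_mem⟩ ⟨_, hx⟩ from hadj).reachable.symm.trans hr⟩

lemma IsArcWedge.val_sub_lt_iff_of_inf_adj [NeZero n] (hA : IsArcWedge e W₁ w₁ a ℓ)
    (he : IsCyclicLabelling G C e) (hB : IsArcWedge e W₂ w₂ c m) {p q : ZMod n}
    (h : (W₁ ⊓ W₂).Adj (e p) (e q)) :
    (p - a).val < (c - a).val ↔ (q - a).val < (c - a).val := by
  rcases (he.adj_iff p q).mp (Subgraph.adj_sub _ h) with rfl | rfl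
  · have := (hA.inf_adj_sub_one_iff hB (p + 1)).mp (by rwa [add_sub_cancel_right])
    simpa using ZMod.val_sub_one_sub_lt_iff this.1.2 this.2.2
  · have := (hA.inf_adj_sub_one_iff hB (q + 1)).mp (by rw [add_sub_cancel_right]; exact h.symm)
    simpa using (ZMod.val_sub_one_sub_lt_iff this.1.2 this.2.2).symm

lemma IsArcWedge.card_connectedComponent_inf (he : IsCyclicLabelling G C e)
    (hA : IsArcWedge e W₁ w₁ a ℓ) (hB : IsArcWedge e W₂ w₂ c m) (hC : (W₁ ⊓ W₂).verts ⊆ C) :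
    Nat.card (W₁ ⊓ W₂).coe.ConnectedComponent ≤ 2 ∧
      (Nat.card (W₁ ⊓ W₂).coe.ConnectedComponent = 2 ↔
        a ∈ ZMod.arc c m ∧ c ∈ ZMod.arc a ℓ ∧ a ≠ c) := by
  have := he.neZero
  set K := W₁ ⊓ W₂
  have hmem : ∀ x, e x ∈ K.verts ↔ x ∈ ZMod.arc a ℓ ∧ x ∈ ZMod.arc c m := fun x ↦
    (hA.mem_verts_iff x).and (hB.mem_verts_iff x)
  have hmem_anchor : ∀ x, e x ∈ K.verts → e (ZMod.anchor a c x) ∈ K.verts := fun x hx ↦ by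
    obtain ⟨t, ht, -⟩ := hA.exists_reachable_anchor hB x hx
    exact ht ▸ t.2
  let f : K.verts → Prop := fun z ↦ ∃ x, e x = z ∧ (x - a).val < (c - a).val
  have hf : ∀ x (hx : e x ∈ K.verts), f ⟨e x, hx⟩ ↔ (x - a).val < (c - a).val := fun x hx ↦
    ⟨fun ⟨y, hy, h⟩ ↦ he.injective hy ▸ h, fun h ↦ ⟨x, rfl, h⟩⟩
  refine (card_connectedComponent_of_iff_invariant f ?_ ?_).imp_right (Iff.trans · ?_)
  · rintro ⟨_, hy⟩ ⟨_, hz⟩ h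
    obtain ⟨p, rfl⟩ := he.exists_eq (hC hy)
    obtain ⟨q, rfl⟩ := he.exists_eq (hC hz)
    rw [hf, hf]
    exact hA.val_sub_lt_iff_of_inf_adj he hB h
  · rintro ⟨_, hy⟩ ⟨_, hz⟩ h
    obtain ⟨p, rfl⟩ := he.exists_eq (hC hy)
    obtain ⟨q, rfl⟩ := he.exists_eq (hC hz)
    rw [hf, hf] at h
    obtain ⟨t, ht, hr⟩ := hA.exists_reachable_anchor hB p hy
    obtain ⟨t', ht', hr'⟩ := hA.exists_reachable_anchor hB q hz
    have : t = t' := Subtype.ext (by rw [ht, ht', ZMod.anchor_congr h])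
    exact hr.trans (this ▸ hr'.symm)
  constructor
  · rintro ⟨⟨⟨_, hy⟩, hfy⟩, ⟨_, hz⟩, hfz⟩
    obtain ⟨p, rfl⟩ := he.exists_eq (hC hy)
    obtain ⟨q, rfl⟩ := he.exists_eq (hC hz)
    rw [hf] at hfy hfz
    have ha := hmem_anchor p hy
    have hc := hmem_anchor q hz
    rw [ZMod.anchor_eq_left hfy, hmem] at ha
    rw [ZMod.anchor_eq_right hfz, hmem] at hc
    refine ⟨ha.2, hc.1, fun hac ↦ ?_⟩
    simp [hac] at hfy
  · rintro ⟨ha, hc, hac⟩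
    have hKa : e a ∈ K.verts := (hmem a).mpr ⟨hA.mem_arc_self, ha⟩
    have hKc : e c ∈ K.verts := (hmem c).mpr ⟨hc, hB.mem_arc_self⟩
    refine ⟨⟨⟨e a, hKa⟩, (hf a hKa).mpr ?_⟩, ⟨e c, hKc⟩, by rw [hf]; exact lt_irrefl _⟩
    simpa using ZMod.val_sub_pos_iff_ne.mpr hac.symm

end Intersection

section Cobweb

variable {G : SimpleGraph V} {C I : Set V} {W W₁ W₂ : G.Subgraph} {u v : V}

lemma IsWedge.mem_verts (hW : IsWedge G C I W v) : v ∈ W.verts := by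
  obtain ⟨-, -, hWI, -⟩ := hW
  exact (hWI.symm ▸ Set.mem_singleton v : v ∈ W.verts ∩ I).1

lemma IsWedge.notMem_verts (hW : IsWedge G C I W v) (hu : u ∈ I) (huv : u ≠ v) :
    u ∉ W.verts := by
  obtain ⟨-, -, hWI, -⟩ := hW
  exact fun h ↦ huv (hWI ▸ ⟨h, hu⟩ : u ∈ ({v} : Set V))

lemma IsWedge.verts_subset (hW : IsWedge G C I W v) (hIC : I = Cᶜ) : W.verts ⊆ insert v C := by
  intro y hy
  by_contra hy'
  rw [Set.mem_insert_iff, not_or] at hy'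
  exact hW.notMem_verts (hIC ▸ hy'.2) hy'.1 hy

lemma IsWedge.card_connectedComponent (hW : IsWedge G C I W v) :
    Nat.card W.coe.ConnectedComponent = 1 :=
  Nat.card_eq_one_iff_unique.mpr ⟨hW.1.1.preconnected.subsingleton_connectedComponent,
    ⟨W.coe.connectedComponentMk ⟨v, hW.mem_verts⟩⟩⟩

lemma IsWedge.adj_of_mem_verts (hW : IsWedge G C I W v) {y : V} (hy : G.Adj v y)
    (hyW : y ∈ W.verts) : W.Adj v y := by
  have hvW := hW.mem_verts
  obtain ⟨⟨-, hdeg⟩, -, -, hN⟩ := hW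
  have hsub : W.neighborSet v ⊆ W.verts ∩ G.neighborSet v := fun z hz ↦ ⟨hz.snd_mem, W.adj_sub hz⟩
  have heq := Set.eq_of_subset_of_ncard_le hsub (by rw [hN, hdeg v hvW])
    (Set.finite_of_ncard_ne_zero (by rw [hN]; omega))
  have : y ∈ W.neighborSet v := heq ▸ ⟨hyW, hy⟩
  exact this

lemma IsWedge.inf_verts_subset (hW₁ : IsWedge G C I W₁ u) (hW₂ : IsWedge G C I W₂ v)
    (hIC : I = Cᶜ) (huv : u ≠ v) : (W₁ ⊓ W₂).verts ⊆ C := fun _ ⟨hy₁, hy₂⟩ ↦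
  (hW₁.verts_subset hIC hy₁).resolve_left fun hyu ↦
    hW₂.notMem_verts hW₁.2.1 huv (hyu ▸ hy₂)

lemma IsCobweb.neighborSet_subset (hcob : IsCobweb G C I) (hu : u ∈ I) :
    G.neighborSet u ⊆ C := by
  obtain ⟨-, hIC, -, hindep, -⟩ := hcob
  exact fun y hy ↦ by_contra fun hyC ↦ hindep u hu y (hIC ▸ hyC) hy

variable {n : ℕ} {e : ZMod n → V} {a : ZMod n} {ℓ : ℕ}

lemma IsCobweb.exists_isArcWedge (hcob : IsCobweb G C I) (he : IsCyclicLabelling G C e)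
    (hW : IsWedge G C I W v) : ∃ a ℓ, IsArcWedge e W v a ℓ :=
  he.exists_isArcWedge (by simpa [hcob.2.1] using hW.2.1) (hW.verts_subset hcob.2.1) hW.mem_verts
    hW.1.2

lemma IsArcWedge.adj_and_mem_arc_iff (hA : IsArcWedge e W v a ℓ) (hW : IsWedge G C I W v)
    (x : ZMod n) : G.Adj v (e x) ∧ x ∈ ZMod.arc a ℓ ↔ x = a ∨ (x - a).val + 1 = ℓ := by
  rw [← hA.mem_verts_iff, ← hA.adj_iff]
  exact ⟨fun ⟨h, hx⟩ ↦ hW.adj_of_mem_verts h hx, fun h ↦ ⟨W.adj_sub h, h.snd_mem⟩⟩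

lemma IsArcWedge.attaches_iff (hA : IsArcWedge e W v a ℓ) (he : IsCyclicLabelling G C e)
    (hu : u ∉ W.verts) (hN : G.neighborSet u ⊆ C) :
    Attaches G u W ↔ ∀ x, G.Adj u (e x) → x ∈ ZMod.arc a ℓ := by
  refine ⟨fun h x hx ↦ (hA.mem_verts_iff x).mp (h.2 hx), fun h ↦ ⟨hu, fun y hy ↦ ?_⟩⟩
  obtain ⟨x, rfl⟩ := he.exists_eq (hN hy)
  exact (hA.mem_verts_iff x).mpr (h x hy)

lemma IsCobweb.not_forall_adj_imp_adj (hcob : IsCobweb G C I) (he : IsCyclicLabelling G C e)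
    (hu : u ∈ I) (hv : v ∈ I) (huv : u ≠ v) : ¬ ∀ x, G.Adj u (e x) → G.Adj v (e x) := by
  refine fun h ↦ hcob.2.2.2.2.2 u hu v hv huv fun y hy ↦ ?_
  obtain ⟨x, rfl⟩ := he.exists_eq (hcob.neighborSet_subset hu hy)
  exact h x hy

end Cobweb

/-- `σ u ⊓ σ v` has at most two components, with exactly two
components iff `u` and `v` attach to each other's wedges. -/
theorem intersection_components [Finite V] (G : SimpleGraph V) (C I : Set V)
    (hcob : IsCobweb G C I) (σ : V → G.Subgraph)
    (hσ : ∀ v ∈ I, IsWedge G C I (σ v) v)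
    (u v : V) (hu : u ∈ I) (hv : v ∈ I) :
    Nat.card ((σ u ⊓ σ v).coe.ConnectedComponent) ≤ 2 ∧
      (Nat.card ((σ u ⊓ σ v).coe.ConnectedComponent) = 2 ↔
        (Attaches G u (σ v) ∧ Attaches G v (σ u))) := by
  rcases eq_or_ne u v with rfl | huv
  · rw [inf_idem, (hσ u hu).card_connectedComponent]
    exact ⟨by norm_num, iff_of_false (by norm_num) fun h ↦ h.1.1 (hσ u hu).mem_verts⟩
  obtain ⟨n, e, he⟩ := hcob.1.exists_isCyclicLabelling
  have := he.neZero
  obtain ⟨a, ℓ, hA⟩ := hcob.exists_isArcWedge he (hσ u hu)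
  obtain ⟨c, m, hB⟩ := hcob.exists_isArcWedge he (hσ v hv)
  rw [hB.attaches_iff he ((hσ v hv).notMem_verts hu huv) (hcob.neighborSet_subset hu),
    hA.attaches_iff he ((hσ u hu).notMem_verts hv huv.symm) (hcob.neighborSet_subset hv),
    ZMod.forall_mem_arc_and_forall_mem_arc_iff hA.le hB.le (hA.adj_and_mem_arc_iff (hσ u hu))
      (hB.adj_and_mem_arc_iff (hσ v hv)) (hcob.not_forall_adj_imp_adj he hu hv huv)]
  exact hA.card_connectedComponent_inf he hB ((hσ u hu).inf_verts_subset (hσ v hv) hcob.2.1 huv)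
end
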